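/- arXiv:2507.21508 — 2 statements merged into one kernel-verified Lean document; each statement's English description precedes it below -/
import Mathlib

section
/- Finite binomial expansion of ∏(1−ℓ_i)^{p−m} in complex zonal polynomials: let p ≥ m ≥ 1 and n ≥ 1 be integers. Then for all real numbers ℓ₁,…,ℓ_n, ∏_{i=1}^n (1−ℓ_i)^{p−m} = Σ_{t=0}^{n(p−m)} Σ_{τ ∈ P^t_n} ((m−p)_τ/t!)·C_τ(ℓ₁,…,ℓ_n), where C_τ(ℓ) = χ_τ·s_τ(ℓ₁,…,ℓ_n). -/
open scoped BigOperators Real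
open MeasureTheory

noncomputable section

/-- The set `P^k_n` of partitions of `k` with at most `n` parts, encoded as weakly
decreasing functions `Fin n → ℕ` summing to `k`. -/
def partitionsOf (n k : ℕ) : Finset (Fin n → ℕ) :=
  (Fintype.piFinset fun _ : Fin n => Finset.range (k + 1)).filter
    fun κ => (∀ i j : Fin n, i ≤ j → κ j ≤ κ i) ∧ ∑ i, κ i = k

/-- `χ_κ = k!·∏_{i<j}(κ_i−κ_j−i+j)/∏_i (κ_i+n−i)!` (0-indexed version). -/
def chi (n : ℕ) (κ : Fin n → ℕ) : ℝ :=
  (Nat.factorial (∑ i, κ i) : ℝ)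
    * (∏ i : Fin n, ∏ j : Fin n,
        if (i : ℕ) < (j : ℕ) then ((κ i : ℝ) - (κ j : ℝ) + (j : ℕ) - (i : ℕ)) else 1)
    / ∏ i : Fin n, (Nat.factorial (κ i + (n - 1 - (i : ℕ))) : ℝ)

/-- `S` is the family of Schur polynomials in `n` variables: for every partition `κ`
(with at most `n` parts), `det((x_i^{κ_j+n−j})) = S κ · ∏_{i<j}(x_i−x_j)`. -/
def IsSchur (n : ℕ) (S : (Fin n → ℕ) → MvPolynomial (Fin n) ℝ) : Prop :=
  ∀ κ : Fin n → ℕ, (∀ i j : Fin n, i ≤ j → κ j ≤ κ i) →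
    (Matrix.of fun i j : Fin n =>
        (MvPolynomial.X i : MvPolynomial (Fin n) ℝ) ^ (κ j + (n - 1 - (j : ℕ)))).det
      = S κ * ∏ i : Fin n, ∏ j : Fin n,
          if (i : ℕ) < (j : ℕ) then (MvPolynomial.X i - MvPolynomial.X j) else 1

/-- The one-row partition `(k, 0, …, 0)`. -/
def oneRow (n k : ℕ) : Fin n → ℕ := fun i => if (i : ℕ) = 0 then k else 0

/-- `δ/τ` is a horizontal strip: `δ_i ≥ τ_i ≥ δ_{i+1}` for all `i`. -/
def IsHStrip {n : ℕ} (τ δ : Fin n → ℕ) : Prop :=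
  (∀ i, τ i ≤ δ i) ∧ ∀ i j : Fin n, (i : ℕ) + 1 = (j : ℕ) → δ j ≤ τ i

instance {n : ℕ} (τ δ : Fin n → ℕ) : Decidable (IsHStrip τ δ) := by
  unfold IsHStrip; infer_instance

/-- The generalized (complex) Pochhammer symbol `(a)_κ = ∏_i (a−i+1)_{κ_i}` (0-indexed). -/
def pochP {n : ℕ} (a : ℝ) (κ : Fin n → ℕ) : ℝ :=
  ∏ i : Fin n, (ascPochhammer ℝ (κ i)).eval (a - (i : ℕ))

/-- The complex multivariate gamma function `Γ_n(a, κ)`. -/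
def cGammaP (n : ℕ) (a : ℝ) (κ : Fin n → ℕ) : ℝ :=
  Real.pi ^ (n * (n - 1) / 2) * ∏ i : Fin n, Real.Gamma (a + (κ i : ℝ) - (i : ℕ))

/-- `Γ_n(a) = Γ_n(a, 0)`. -/
def cGamma (n : ℕ) (a : ℝ) : ℝ := cGammaP n a fun _ => 0

/-- Pad a partition with at most `n` parts to one with at most `m` parts (`m ≥ n`). -/
def padP {n : ℕ} (m : ℕ) (κ : Fin n → ℕ) : Fin m → ℕ :=
  fun i => if h : (i : ℕ) < n then κ ⟨i, h⟩ else 0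


/-!
Multiply both sides by the Vandermonde determinant `det (x_i ^ (n-1-j)) = ∏_{i<j} (x_i - x_j)`.
The left side becomes `det ((1 - x_i)^d x_i^(n-1-j))`, and the Cauchy–Binet formula for its
factorization into monomials times coefficients writes it as a sum over strictly decreasing
exponents `a = τ + (n-1, …, 1, 0)`, i.e. over partitions `τ`, of
`det (x_i ^ a_k) = s_τ · Vandermonde` times the minor of the coefficients of `(1 - x)^d x^(n-1-j)`.
Up to the sign `(-1)^|τ|` and the row factors `a_k! (d+n-1-a_k)! / d!`, this minor is the falling
factorial determinant `det ((a_k)_{n-1-j} (d+n-1-a_k)_j)`, which column operations reduce to a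
constant times the Vandermonde determinant in the `a_k`; what comes out is `(-d)_τ χ_τ / |τ|!`.
Partitions with a part larger than `d` contribute nothing, since then `(-d)_τ = 0`.
-/

open Finset Matrix Polynomial

section CauchyBinet

variable {R ι : Type*} [CommRing R] {n : ℕ}

theorem det_of_sum_mul_eq_sum_piFinset [DecidableEq ι] (s : Finset ι) (A : Fin n → ι → R)
    (B : ι → Fin n → R) :
    (of fun i j => ∑ e ∈ s, A i e * B e j).det
      = ∑ r ∈ Fintype.piFinset fun _ => s, (∏ j, B (r j) j) * (of fun i j => A i (r j)).det := by
  simp only [det_apply', of_apply, prod_univ_sum, mul_sum, prod_mul_distrib]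
  rw [sum_comm]
  refine sum_congr rfl fun r _ => sum_congr rfl fun σ _ => ?_
  ring

theorem sum_piFinset_eq_sum_strictAnti_sum_perm [LinearOrder ι] {M : Type*} [AddCommMonoid M]
    (s : Finset ι) (F : (Fin n → ι) → M) (hF : ∀ r, ¬ Function.Injective r → F r = 0) :
    ∑ r ∈ Fintype.piFinset (fun _ => s), F r
      = ∑ a ∈ (Fintype.piFinset fun _ => s).filter StrictAnti,
          ∑ σ : Equiv.Perm (Fin n), F (a ∘ σ) := by
  let ρ : (Fin n → ι) → Equiv.Perm (Fin n) := fun r => Fin.revPerm.trans (Tuple.sort r)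
  have hρ : ∀ r, Antitone (r ∘ ρ r) := fun r =>
    (Tuple.monotone_sort r).comp_antitone fun _ _ h => Fin.rev_le_rev.mpr h
  have hρ_eq : ∀ (a : Fin n → ι) (σ : Equiv.Perm (Fin n)), StrictAnti a → ρ (a ∘ σ) = σ.symm := by
    intro a σ ha
    have hσ : (a ∘ σ) ∘ σ.symm = a := by funext j; simp
    have h := Tuple.unique_antitone (f := a ∘ σ) (hρ _) (by rw [hσ]; exact ha.antitone)
    exact Equiv.ext fun j => (ha.injective.comp σ.injective) (congrFun h j)
  rw [← sum_filter_of_ne (p := Function.Injective) fun r _ h => by_contra fun hr => h (hF r hr),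
    ← sum_product']
  refine sum_nbij' (fun r => (r ∘ ρ r, (ρ r).symm)) (fun p => p.1 ∘ p.2) ?_ ?_ ?_ ?_ ?_
  · intro r hr
    simp only [mem_filter, Fintype.mem_piFinset] at hr
    simp only [mem_product, mem_filter, Fintype.mem_piFinset, mem_univ, and_true,
      Function.comp_apply]
    exact ⟨fun j => hr.1 _, (hρ r).strictAnti_of_injective (hr.2.comp (ρ r).injective)⟩
  · rintro ⟨a, σ⟩ h
    simp only [mem_product, mem_filter, Fintype.mem_piFinset, mem_univ, and_true] at h
    simp only [mem_filter, Fintype.mem_piFinset, Function.comp_apply]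
    exact ⟨fun j => h.1 _, h.2.injective.comp σ.injective⟩
  · intro r _
    funext j
    simp
  · rintro ⟨a, σ⟩ h
    simp only [mem_product, mem_filter, mem_univ, and_true] at h
    simp only [hρ_eq a σ h.2, Equiv.symm_symm, Prod.mk.injEq, and_true]
    funext j
    simp
  · intro r _
    congr 1
    funext j
    simp

/-- The Cauchy–Binet formula. -/
theorem det_of_sum_mul_eq_sum_strictAnti [LinearOrder ι] (s : Finset ι) (A : Fin n → ι → R)
    (B : ι → Fin n → R) :
    (of fun i j => ∑ e ∈ s, A i e * B e j).det
      = ∑ a ∈ (Fintype.piFinset fun _ => s).filter StrictAnti,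
          (of fun i k => A i (a k)).det * (of fun k j => B (a k) j).det := by
  rw [det_of_sum_mul_eq_sum_piFinset, sum_piFinset_eq_sum_strictAnti_sum_perm]
  · refine sum_congr rfl fun a _ => ?_
    have hperm : ∀ σ : Equiv.Perm (Fin n), (of fun i j => A i (a (σ j))).det
        = Equiv.Perm.sign σ * (of fun i k => A i (a k)).det := fun σ =>
      det_permute' σ (of fun i k => A i (a k))
    simp only [hperm, det_apply' (of fun k j => B (a k) j), of_apply, mul_sum, Function.comp_apply]
    refine sum_congr rfl fun σ _ => ?_
    ring
  · intro r hr
    obtain ⟨j, k, hjk, hne⟩ := Function.not_injective_iff.mp hr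
    rw [det_zero_of_column_eq hne fun i => by simp [hjk], mul_zero]

end CauchyBinet

section Polynomials

variable {R : Type*} [CommRing R] {n : ℕ}

theorem det_eval_eq_sum_strictAnti (N : ℕ) (p : Fin n → R[X]) (hp : ∀ j, (p j).natDegree < N)
    (v : Fin n → R) :
    (of fun i j => (p j).eval (v i)).det
      = ∑ a ∈ (Fintype.piFinset fun _ => range N).filter StrictAnti,
          (of fun i k => v i ^ a k).det * (of fun k j => (p j).coeff (a k)).det := by
  rw [← det_of_sum_mul_eq_sum_strictAnti (A := fun i e => v i ^ e) (B := fun e j => (p j).coeff e)]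
  congr 1
  ext i j
  rw [of_apply, eval_eq_sum_range' (hp j)]
  exact sum_congr rfl fun e _ => mul_comm _ _

theorem prod_ite_lt_eq_prod_prod_Ioi {M : Type*} [CommMonoid M] (f : Fin n → Fin n → M) :
    (∏ i : Fin n, ∏ j : Fin n, if (i : ℕ) < j then f i j else 1) = ∏ i, ∏ j ∈ Ioi i, f i j := by
  refine prod_congr rfl fun i _ => ?_
  rw [← prod_filter]
  congr 1
  ext j
  simp only [mem_filter, mem_univ, true_and, mem_Ioi, Fin.lt_def]

theorem prod_prod_Ioi_rev {M : Type*} [CommMonoid M] (f : Fin n → Fin n → M) :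
    ∏ i, ∏ j ∈ Ioi i, f i j = ∏ i, ∏ j ∈ Ioi i, f (Fin.rev j) (Fin.rev i) := by
  rw [prod_sigma', prod_sigma']
  refine prod_nbij' (fun p => ⟨Fin.rev p.2, Fin.rev p.1⟩) (fun p => ⟨Fin.rev p.2, Fin.rev p.1⟩)
    ?_ ?_ ?_ ?_ ?_ <;> simp [Fin.rev_lt_rev]

theorem det_eval_rev_eq_prod_sub_of_monic [IsDomain R] (p : ℕ → R[X])
    (hdeg : ∀ k, (p k).natDegree = k) (hmonic : ∀ k, (p k).Monic) (v : Fin n → R) :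
    (of fun i j : Fin n => (p (n - 1 - j)).eval (v i)).det = ∏ i, ∏ j ∈ Ioi i, (v i - v j) := by
  rw [← det_submatrix_equiv_self Fin.revPerm]
  have hrev : (of fun i j : Fin n => (p (n - 1 - j)).eval (v i)).submatrix Fin.revPerm Fin.revPerm
      = of fun i j : Fin n => (p j).eval (v (Fin.rev i)) := by
    ext i j
    simp only [submatrix_apply, of_apply, Fin.revPerm_apply, Fin.val_rev]
    congr 2
    omega
  rw [hrev, ← det_eval_matrixOfPolynomials_eq_det_vandermonde _ (fun j => p j) (fun j => hdeg j)
    (fun j => hmonic j), det_vandermonde, prod_prod_Ioi_rev]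
  simp only [Fin.rev_rev]

theorem det_pow_rev_eq_prod_sub [IsDomain R] (v : Fin n → R) :
    (of fun i j : Fin n => v i ^ (n - 1 - j)).det = ∏ i, ∏ j ∈ Ioi i, (v i - v j) := by
  simpa using det_eval_rev_eq_prod_sub_of_monic (fun k => X ^ k) (fun k => natDegree_X_pow k)
    (fun k => monic_X_pow k) v

end Polynomials

section FallingFactorialDeterminant

variable {R : Type*} [CommRing R] {n : ℕ}

/-- The matrix `((x_k)_{n-1-j} (y - x_k)_j)` of falling factorials after `r` rounds of the column
operations `col j += col (j - 1)` for `j > r`; each round uses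
`(x)_{n-1-j} (y-x)_{j-r} + (x)_{n-j} (y-x)_{j-r-1} = (y-n+2+r) (x)_{n-1-j} (y-x)_{j-r-1}`. -/
def fallingReduction (x : Fin n → R) (y : R) (r : ℕ) : Matrix (Fin n) (Fin n) R :=
  of fun k j => (ascPochhammer R (min r j)).eval (y - n + 2) *
    ((descPochhammer R (n - 1 - j)).eval (x k) * (descPochhammer R (j - r)).eval (y - x k))

def addPrevColumns (n r : ℕ) : Matrix (Fin n) (Fin n) R :=
  1 + of fun j' j : Fin n => if (j' : ℕ) + 1 = j ∧ r < j then 1 else 0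

theorem det_addPrevColumns (r : ℕ) : (addPrevColumns n r : Matrix (Fin n) (Fin n) R).det = 1 := by
  have htri : (addPrevColumns n r : Matrix (Fin n) (Fin n) R).IsUpperTriangular := by
    intro j' j (h : j < j')
    have h' : (j : ℕ) < j' := h
    simp [addPrevColumns, one_apply, h.ne', show ¬ (j' : ℕ) + 1 = j by omega]
  rw [det_of_isUpperTriangular htri]
  exact prod_eq_one fun j _ => by simp [addPrevColumns]

theorem fallingReduction_mul_addPrevColumns (x : Fin n → R) (y : R) (r : ℕ) :
    fallingReduction x y r * addPrevColumns n r = fallingReduction x y (r + 1) := by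
  ext k j
  rw [addPrevColumns, Matrix.mul_add, Matrix.mul_one, Matrix.add_apply, mul_apply]
  simp only [of_apply, mul_ite, mul_one, mul_zero]
  by_cases hrj : r < j
  · obtain ⟨m, hm⟩ : ∃ m, (j : ℕ) = m + 1 := ⟨j - 1, by omega⟩
    have hmn : m < n := by omega
    rw [sum_eq_single ⟨m, hmn⟩
      (fun j' _ h => if_neg fun h' => h (Fin.ext (by simp only; omega))) (by simp),
      if_pos ⟨hm.symm, hrj⟩]
    simp only [fallingReduction, of_apply, hm]
    rw [min_eq_left (by omega), min_eq_left (by omega), min_eq_left (by omega),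
      show m + 1 - r = (m - r) + 1 by omega, show m + 1 - (r + 1) = m - r by omega,
      show n - 1 - m = (n - 1 - (m + 1)) + 1 by omega, descPochhammer_succ_eval,
      descPochhammer_succ_eval, ascPochhammer_succ_eval]
    have hcast : ((n - 1 - (m + 1) : ℕ) : R) = n - 2 - m := by
      rw [Nat.cast_sub (by omega), Nat.cast_sub (by omega)]; push_cast; ring
    rw [hcast, Nat.cast_sub (by omega : r ≤ m)]
    ring
  · rw [sum_eq_zero fun j' _ => if_neg fun h => hrj h.2, add_zero]
    simp only [fallingReduction, of_apply]
    rw [min_eq_right (by omega), min_eq_right (by omega),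
      Nat.sub_eq_zero_of_le (show (j : ℕ) ≤ r by omega),
      Nat.sub_eq_zero_of_le (show (j : ℕ) ≤ r + 1 by omega)]

theorem det_fallingReduction (x : Fin n → R) (y : R) (r : ℕ) :
    (fallingReduction x y r).det = (fallingReduction x y 0).det := by
  induction r with
  | zero => rfl
  | succ r ih =>
    rw [← fallingReduction_mul_addPrevColumns, det_mul, det_addPrevColumns, mul_one, ih]

theorem det_descPochhammer_mul_descPochhammer_sub [IsDomain R] (x : Fin n → R) (y : R) :
    (of fun k j : Fin n =>
        (descPochhammer R (n - 1 - j)).eval (x k) * (descPochhammer R j).eval (y - x k)).det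
      = (∏ j : Fin n, (ascPochhammer R j).eval (y - n + 2)) * ∏ k, ∏ l ∈ Ioi k, (x k - x l) := by
  have h0 : (of fun k j : Fin n =>
      (descPochhammer R (n - 1 - j)).eval (x k) * (descPochhammer R j).eval (y - x k))
      = fallingReduction x y 0 := by
    ext k j
    simp [fallingReduction]
  have hn : fallingReduction x y n = of fun k j : Fin n =>
      (ascPochhammer R j).eval (y - n + 2) * (descPochhammer R (n - 1 - j)).eval (x k) := by
    ext k j
    simp [fallingReduction]
  have hscale := det_mul_row (fun j : Fin n => (ascPochhammer R j).eval (y - n + 2))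
    (of fun k j : Fin n => (descPochhammer R (n - 1 - j)).eval (x k))
  simp only [of_apply] at hscale
  rw [h0, ← det_fallingReduction x y n, hn, hscale,
    det_eval_rev_eq_prod_sub_of_monic (descPochhammer R) (fun k => descPochhammer_natDegree R k)
    (fun k => monic_descPochhammer R k)]

end FallingFactorialDeterminant

section BinomialDeterminant

open Nat

theorem coeff_one_sub_X_pow {R : Type*} [CommRing R] (d k : ℕ) :
    ((1 - X : R[X]) ^ d).coeff k = (-1) ^ k * d.choose k := by
  have h : (1 - X : R[X]) ^ d = C ((-1) ^ d) * (X + C (-1)) ^ d := by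
    rw [C_pow, ← mul_pow]
    congr 1
    simp only [map_neg, map_one, mul_add, neg_one_mul, neg_neg]
    ring
  rw [h, coeff_C_mul, coeff_X_add_C_pow]
  rcases le_or_gt k d with hk | hk
  · rw [← mul_assoc, ← pow_add, show d + (d - k) = k + 2 * (d - k) by omega, pow_add, pow_mul]
    simp
  · simp [Nat.choose_eq_zero_of_lt hk]

theorem coeff_one_sub_X_pow_mul_X_pow {R : Type*} [CommRing R] (d q e : ℕ) :
    ((1 - X : R[X]) ^ d * X ^ q).coeff e
      = (-1) ^ e * (-1) ^ q * (if q ≤ e then (d.choose (e - q) : R) else 0) := by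
  rw [coeff_mul_X_pow']
  split_ifs with h
  · rw [coeff_one_sub_X_pow, ← pow_add, show e + q = e - q + 2 * q by omega, pow_add, pow_mul]
    simp
  · simp

theorem factorial_mul_factorial_mul_choose_sub {d m b q : ℕ} (hb : b ≤ d + m) (hq : q ≤ m) :
    b ! * (d + m - b)! * (if q ≤ b then d.choose (b - q) else 0)
      = d ! * (b.descFactorial q * (d + m - b).descFactorial (m - q)) := by
  by_cases hqb : q ≤ b
  · rw [if_pos hqb]
    by_cases hbd : b ≤ d + q
    · rw [← factorial_mul_descFactorial hqb,
        ← factorial_mul_descFactorial (show m - q ≤ d + m - b by omega),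
        ← choose_mul_factorial_mul_factorial (show b - q ≤ d by omega),
        show d + m - b - (m - q) = d - (b - q) by omega]
      ring
    · rw [choose_eq_zero_of_lt (by omega),
        descFactorial_eq_zero_iff_lt.mpr (by omega : d + m - b < m - q)]
      simp
  · rw [if_neg hqb, descFactorial_eq_zero_iff_lt.mpr (by omega : b < q)]
    simp

variable {R : Type*} [CommRing R] [IsDomain R] {n : ℕ}

theorem prod_factorial_mul_det_choose (d : ℕ) (b : Fin n → ℕ) (hb : ∀ k, b k ≤ d + (n - 1)) :
    (∏ k, ((b k)! * (d + (n - 1) - b k)! : R))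
        * (of fun k j : Fin n =>
            if n - 1 - j ≤ b k then (d.choose (b k - (n - 1 - j)) : R) else 0).det
      = (∏ j : Fin n, ((d + j)! : R)) * ∏ k, ∏ l ∈ Ioi k, ((b k : R) - b l) := by
  rw [← det_mul_column]
  simp only [of_apply]
  have hentry : (of fun k j : Fin n => ((b k)! * (d + (n - 1) - b k)! : R) *
      if n - 1 - j ≤ b k then (d.choose (b k - (n - 1 - j)) : R) else 0)
      = (d ! : R) • of fun k j : Fin n => (descPochhammer R (n - 1 - j)).eval (b k : R)
          * (descPochhammer R j).eval (((d + (n - 1) : ℕ) : R) - b k) := by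
    ext k j
    have h := factorial_mul_factorial_mul_choose_sub (hb k) (show n - 1 - (j : ℕ) ≤ n - 1 by omega)
    rw [show n - 1 - (n - 1 - (j : ℕ)) = j by omega] at h
    have h' := congrArg (Nat.cast : ℕ → R) h
    push_cast [apply_ite (Nat.cast : ℕ → R)] at h'
    rw [of_apply, h', Matrix.smul_apply, of_apply, smul_eq_mul,
      descPochhammer_eval_eq_descFactorial,
      ← Nat.cast_sub (hb k), descPochhammer_eval_eq_descFactorial]
  have hconst : ∀ j : Fin n, (d ! : R) * (ascPochhammer R j).eval (((d + (n - 1) : ℕ) : R) - n + 2)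
      = ((d + j)! : R) := by
    intro j
    have hj := j.isLt
    rw [show ((d + (n - 1) : ℕ) : R) - n + 2 = ((d + 1 : ℕ) : R) by
        rw [Nat.cast_add, Nat.cast_sub (by omega)]; push_cast; ring,
      ascPochhammer_nat_eq_natCast_ascFactorial, ← Nat.cast_mul, factorial_mul_ascFactorial]
  rw [hentry, det_smul, det_descPochhammer_mul_descPochhammer_sub, Fintype.card_fin, ← mul_assoc,
    ← Fin.prod_const, ← prod_mul_distrib]
  simp only [hconst]

end BinomialDeterminant

section CoefficientDeterminant

open Nat

variable {n : ℕ}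

theorem det_coeff_one_sub_X_pow_mul_X_pow {R : Type*} [CommRing R] (d : ℕ) (b : Fin n → ℕ) :
    (of fun k j : Fin n => ((1 - X : R[X]) ^ d * X ^ (n - 1 - j)).coeff (b k)).det
      = (-1) ^ (∑ k, b k + ∑ j : Fin n, (n - 1 - j))
        * (of fun k j : Fin n =>
            if n - 1 - j ≤ b k then (d.choose (b k - (n - 1 - j)) : R) else 0).det := by
  have hrows := det_mul_column (fun k => (-1 : R) ^ b k) (of fun k j : Fin n =>
    (-1) ^ (n - 1 - (j : ℕ)) * if n - 1 - j ≤ b k then (d.choose (b k - (n - 1 - j)) : R) else 0)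
  have hcols := det_mul_row (fun j : Fin n => (-1 : R) ^ (n - 1 - (j : ℕ))) (of fun k j : Fin n =>
    if n - 1 - j ≤ b k then (d.choose (b k - (n - 1 - j)) : R) else 0)
  simp only [of_apply] at hrows hcols
  simp only [coeff_one_sub_X_pow_mul_X_pow, mul_assoc, hrows, hcols, prod_pow_eq_pow_sum, pow_add]

theorem pochP_neg_natCast (d : ℕ) (τ : Fin n → ℕ) :
    pochP (-(d : ℝ)) τ = (-1) ^ (∑ k, τ k) * ∏ k : Fin n, ((d + k).descFactorial (τ k) : ℝ) := by
  rw [pochP, ← prod_pow_eq_pow_sum, ← prod_mul_distrib]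
  refine prod_congr rfl fun k _ => ?_
  rw [show -(d : ℝ) - (k : ℕ) = -((d + k : ℕ) : ℝ) by push_cast; ring,
    ascPochhammer_eval_neg_eq_descPochhammer, descPochhammer_eval_eq_descFactorial]

theorem det_coeff_one_sub_X_pow_mul_X_pow_staircase (d : ℕ) (τ : Fin n → ℕ)
    (hτ : ∀ k, τ k ≤ d + k) :
    (of fun k j : Fin n => ((1 - X : ℝ[X]) ^ d * X ^ (n - 1 - j)).coeff (τ k + (n - 1 - k))).det
      = pochP (-(d : ℝ)) τ / (∑ k, τ k)! * chi n τ := by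
  set a : Fin n → ℕ := fun k => τ k + (n - 1 - k) with ha
  have hsign : (-1 : ℝ) ^ (∑ k, a k + ∑ j : Fin n, (n - 1 - j)) = (-1) ^ (∑ k, τ k) := by
    simp only [ha, sum_add_distrib, add_assoc, ← two_mul, pow_add, pow_mul, neg_one_sq, one_pow,
      mul_one]
  have hfact : ∀ k : Fin n,
      ((d + k)! : ℝ) = (d + (n - 1) - a k)! * (d + k).descFactorial (τ k) := by
    intro k
    have := k.isLt
    rw [show d + (n - 1) - a k = d + k - τ k by simp only [ha]; omega, ← Nat.cast_mul,
      factorial_mul_descFactorial (hτ k)]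
  have hshift : ∀ k : Fin n, (a k : ℝ) + (k : ℕ) = τ k + (n - 1 : ℕ) := by
    intro k
    have := k.isLt
    simp only [ha]
    norm_cast
    omega
  have hbin := prod_factorial_mul_det_choose (R := ℝ) d a fun k => by
    have := k.isLt; have := hτ k; simp only [ha]; omega
  have hdiff : ∀ k l : Fin n, (a k : ℝ) - a l = (τ k : ℝ) - τ l + (l : ℕ) - (k : ℕ) :=
    fun k l => by linarith [hshift k, hshift l]
  simp only [hfact, prod_mul_distrib, hdiff] at hbin
  have hG : (∏ k, ((d + (n - 1) - a k)! : ℝ)) ≠ 0 := prod_ne_zero_iff.mpr fun k _ => by positivity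
  have hbin' : (∏ k, ((a k)! : ℝ)) * (of fun k j : Fin n =>
        if n - 1 - j ≤ a k then (d.choose (a k - (n - 1 - j)) : ℝ) else 0).det
      = (∏ k : Fin n, ((d + k).descFactorial (τ k) : ℝ))
        * ∏ k, ∏ l ∈ Ioi k, ((τ k : ℝ) - τ l + (l : ℕ) - (k : ℕ)) :=
    mul_left_cancel₀ hG (by linear_combination hbin)
  simp only [ha] at hbin'
  rw [det_coeff_one_sub_X_pow_mul_X_pow, hsign, pochP_neg_natCast, chi,
    prod_ite_lt_eq_prod_prod_Ioi]
  field_simp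
  linear_combination hbin'

end CoefficientDeterminant

section Staircase

variable {n : ℕ}

theorem StrictAnti.add_le_add_of_le {a : Fin n → ℕ} (ha : StrictAnti a) {i j : Fin n}
    (hij : i ≤ j) : a j + j ≤ a i + i := by
  obtain ⟨k, hk⟩ : ∃ k, (j : ℕ) = i + k := ⟨j - i, by rw [Fin.le_def] at hij; omega⟩
  induction k generalizing j with
  | zero => rw [Fin.ext (show (j : ℕ) = i by omega)]
  | succ k ih =>
    have hk' : (i : ℕ) + k < n := by omega
    have h₁ := ih (j := ⟨i + k, hk'⟩) (by rw [Fin.le_def]; simp) rfl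
    have h₂ : a j < a ⟨i + k, hk'⟩ := ha (by rw [Fin.lt_def]; simp only; omega)
    simp only at h₁
    omega

theorem StrictAnti.sub_le_apply {a : Fin n → ℕ} (ha : StrictAnti a) (k : Fin n) :
    n - 1 - k ≤ a k := by
  have := k.isLt
  have := ha.add_le_add_of_le (show k ≤ ⟨n - 1, by omega⟩ by rw [Fin.le_def]; simp; omega)
  simp only at this
  omega

theorem sum_strictAnti_eq_sum_antitone {M : Type*} [AddCommMonoid M] (d : ℕ)
    (g : (Fin n → ℕ) → M) :
    ∑ a ∈ (Fintype.piFinset fun _ => range (n + d)).filter StrictAnti, g a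
      = ∑ τ ∈ (Fintype.piFinset fun _ => range (d + 1)).filter Antitone,
          g fun k => τ k + (n - 1 - k) := by
  have hinv : ∀ a : Fin n → ℕ, StrictAnti a →
      (fun k : Fin n => a k - (n - 1 - k) + (n - 1 - k)) = a :=
    fun a ha => funext fun k => Nat.sub_add_cancel (ha.sub_le_apply k)
  refine sum_nbij' (fun a k => a k - (n - 1 - k)) (fun τ k => τ k + (n - 1 - k)) ?_ ?_ ?_ ?_ ?_
  · intro a ha
    simp only [mem_filter, Fintype.mem_piFinset, mem_range] at ha ⊢
    refine ⟨fun k => ?_, fun i j hij => ?_⟩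
    · have hk := k.isLt
      have h₁ := ha.2.add_le_add_of_le (show (⟨0, by omega⟩ : Fin n) ≤ k by rw [Fin.le_def]; simp)
      have h₂ := ha.1 ⟨0, by omega⟩
      simp only at h₁
      omega
    · have := ha.2.add_le_add_of_le hij
      have := ha.2.sub_le_apply i
      have := ha.2.sub_le_apply j
      dsimp only
      omega
  · intro τ hτ
    simp only [mem_filter, Fintype.mem_piFinset, mem_range] at hτ ⊢
    refine ⟨fun k => by have := hτ.1 k; omega, fun i j hij => ?_⟩
    have := hτ.2 hij.le
    rw [Fin.lt_def] at hij
    dsimp only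
    omega
  · intro a ha
    exact hinv a (mem_filter.mp ha).2
  · intro τ _
    funext k
    simp
  · intro a ha
    rw [hinv a (mem_filter.mp ha).2]

theorem sum_range_sum_partitionsOf_eq_sum_antitone {M : Type*} [AddCommMonoid M] (d : ℕ)
    (h : ℕ → (Fin n → ℕ) → M)
    (hvanish : ∀ τ : Fin n → ℕ, Antitone τ → ∀ k, d < τ k → h (∑ k, τ k) τ = 0) :
    ∑ t ∈ range (n * d + 1), ∑ τ ∈ partitionsOf n t, h t τ
      = ∑ τ ∈ (Fintype.piFinset fun _ => range (d + 1)).filter Antitone, h (∑ k, τ k) τ := by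
  rw [sum_sigma']
  refine sum_bij_ne_zero (fun p _ _ => p.2) ?_ ?_ ?_ ?_
  · rintro ⟨t, τ⟩ hp hne
    simp only [mem_sigma, partitionsOf, mem_filter] at hp
    obtain ⟨-, -, hanti, rfl⟩ := hp
    simp only [mem_filter, Fintype.mem_piFinset, mem_range]
    exact ⟨fun k => by_contra fun hk => hne (hvanish τ (fun i j => hanti i j) k (by omega)),
      fun i j => hanti i j⟩
  · rintro ⟨t₁, τ₁⟩ hp₁ - ⟨t₂, τ₂⟩ hp₂ - (rfl : τ₁ = τ₂)
    simp only [mem_sigma, partitionsOf, mem_filter] at hp₁ hp₂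
    rw [← hp₁.2.2.2, ← hp₂.2.2.2]
  · intro τ hτ hne
    simp only [mem_filter, Fintype.mem_piFinset, mem_range] at hτ
    refine ⟨⟨∑ k, τ k, τ⟩, ?_, hne, rfl⟩
    simp only [mem_sigma, mem_range, partitionsOf, mem_filter, Fintype.mem_piFinset, and_true]
    refine ⟨?_, fun k => Nat.lt_succ_of_le (single_le_sum (fun _ _ => Nat.zero_le _) (mem_univ k)),
      fun i j hij => hτ.2 hij⟩
    calc ∑ k, τ k ≤ ∑ _k : Fin n, d := sum_le_sum fun k _ => Nat.le_of_lt_succ (hτ.1 k)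
      _ < n * d + 1 := by simp
  · rintro ⟨t, τ⟩ hp -
    simp only [mem_sigma, partitionsOf, mem_filter] at hp
    rw [hp.2.2.2]

end Staircase

section Expansion

open Nat

variable {n : ℕ}

theorem pochP_neg_natCast_eq_zero {d : ℕ} {τ : Fin n → ℕ} (hτ : Antitone τ) {k : Fin n}
    (hk : d < τ k) : pochP (-(d : ℝ)) τ = 0 := by
  have := k.isLt
  have h0 : (⟨0, by omega⟩ : Fin n) ≤ k := by rw [Fin.le_def]; simp
  rw [pochP_neg_natCast, prod_eq_zero (mem_univ ⟨0, by omega⟩), mul_zero]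
  simpa [descFactorial_eq_zero_iff_lt] using hk.trans_le (hτ h0)

theorem prod_one_sub_X_pow_eq_sum_schur (d : ℕ) (S : (Fin n → ℕ) → MvPolynomial (Fin n) ℝ)
    (hS : IsSchur n S) :
    ∏ i : Fin n, (1 - MvPolynomial.X i : MvPolynomial (Fin n) ℝ) ^ d
      = ∑ τ ∈ (Fintype.piFinset fun _ => range (d + 1)).filter Antitone,
          MvPolynomial.C (pochP (-(d : ℝ)) τ / (∑ k, τ k)! * chi n τ) * S τ := by
  set V := ∏ i : Fin n, ∏ j ∈ Ioi i, (MvPolynomial.X i - MvPolynomial.X j : MvPolynomial (Fin n) ℝ)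
  have hV : V ≠ 0 := prod_ne_zero_iff.mpr fun i _ => prod_ne_zero_iff.mpr fun j hj =>
    sub_ne_zero.mpr ((MvPolynomial.X_injective (σ := Fin n) (R := ℝ)).ne (mem_Ioi.mp hj).ne)
  let p : Fin n → (MvPolynomial (Fin n) ℝ)[X] := fun j =>
    ((1 - X : ℝ[X]) ^ d * X ^ (n - 1 - j)).map MvPolynomial.C
  have hp : ∀ j, (p j).natDegree < n + d := fun j => by
    refine natDegree_map_le.trans_lt (natDegree_mul_le.trans_lt ?_)
    have h1 : ((1 - X : ℝ[X]) ^ d).natDegree ≤ d := by compute_degree!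
    have h2 := natDegree_X_pow_le (R := ℝ) (n - 1 - j)
    have := j.isLt
    omega
  refine mul_right_cancel₀ hV ?_
  calc (∏ i, (1 - MvPolynomial.X i) ^ d) * V
      = (of fun i j : Fin n => (p j).eval (MvPolynomial.X i)).det := by
        rw [show V = (of fun i j : Fin n => (MvPolynomial.X i) ^ (n - 1 - j)).det from
          (det_pow_rev_eq_prod_sub _).symm, ← det_mul_column]
        congr 1
        ext i j
        simp [p]
    _ = _ := det_eval_eq_sum_strictAnti (n + d) p hp _
    _ = ∑ τ ∈ (Fintype.piFinset fun _ => range (d + 1)).filter Antitone,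
          MvPolynomial.C (pochP (-(d : ℝ)) τ / (∑ k, τ k)! * chi n τ) * S τ * V := by
        rw [sum_strictAnti_eq_sum_antitone]
        refine sum_congr rfl fun τ hτ => ?_
        simp only [mem_filter, Fintype.mem_piFinset, mem_range] at hτ
        have hcoeff : (of fun k j : Fin n => (p j).coeff (τ k + (n - 1 - k))).det
            = MvPolynomial.C (pochP (-(d : ℝ)) τ / (∑ k, τ k)! * chi n τ) := by
          rw [← det_coeff_one_sub_X_pow_mul_X_pow_staircase d τ fun k => by have := hτ.1 k; omega,
            RingHom.map_det]
          exact congrArg det (Matrix.ext fun k j => by simp only [p, coeff_map]; rfl)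
        rw [hcoeff, hS τ fun i j h => hτ.2 h, prod_ite_lt_eq_prod_prod_Ioi]
        ring
    _ = _ := (sum_mul _ _ _).symm

end Expansion

theorem binomial_expansion_complex_zonal_general
    (p m n : ℕ) (hmp : m ≤ p)
    (S : (Fin n → ℕ) → MvPolynomial (Fin n) ℝ) (hS : IsSchur n S)
    (ℓ : Fin n → ℝ) :
    ∏ i : Fin n, (1 - ℓ i) ^ (p - m)
      = ∑ t ∈ Finset.range (n * (p - m) + 1), ∑ τ ∈ partitionsOf n t,
          (pochP ((m : ℝ) - (p : ℝ)) τ / Nat.factorial t)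
            * (chi n τ * MvPolynomial.eval ℓ (S τ)) := by
  obtain ⟨d, rfl⟩ := Nat.exists_eq_add_of_le hmp
  rw [Nat.add_sub_cancel_left, show (m : ℝ) - ((m + d : ℕ) : ℝ) = -(d : ℝ) by push_cast; ring,
    sum_range_sum_partitionsOf_eq_sum_antitone d _ fun τ hτ k hk => by
      rw [pochP_neg_natCast_eq_zero hτ hk, zero_div, zero_mul]]
  have h := congrArg (MvPolynomial.eval ℓ) (prod_one_sub_X_pow_eq_sum_schur d S hS)
  simp only [map_prod, map_pow, map_sub, map_one, MvPolynomial.eval_X, map_sum, map_mul,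
    MvPolynomial.eval_C] at h
  rw [h]
  exact sum_congr rfl fun τ _ => by ring

/-- **Finite binomial expansion of `∏(1−ℓ_i)^{p−m}` in complex zonal polynomials**:
`∏_{i=1}^n (1−ℓ_i)^{p−m} = Σ_{t=0}^{n(p−m)} Σ_{τ∈P^t_n} ((m−p)_τ/t!)·C_τ(ℓ)`. -/
theorem binomial_expansion_complex_zonal
    (p m n : ℕ) (hm : 1 ≤ m) (hmp : m ≤ p) (hn : 1 ≤ n)
    (S : (Fin n → ℕ) → MvPolynomial (Fin n) ℝ) (hS : IsSchur n S)
    (ℓ : Fin n → ℝ) :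
    ∏ i : Fin n, (1 - ℓ i) ^ (p - m)
      = ∑ t ∈ Finset.range (n * (p - m) + 1), ∑ τ ∈ partitionsOf n t,
          (pochP ((m : ℝ) - (p : ℝ)) τ / Nat.factorial t)
            * (chi n τ * MvPolynomial.eval ℓ (S τ)) :=
  binomial_expansion_complex_zonal_general p m n hmp S hS ℓ
end
end

section
/- Relation between the eigenvalues of the Beta and F matrices: let A₁ and A₂ be m×m complex Hermitian matrices with A₁ positive semidefinite and A₂ positive definite, so that A₁+A₂ is positive definite. Let B = (A₁+A₂)^{−1/2} A₁ (A₁+A₂)^{−1/2} and F = A₂^{−1/2} A₁ A₂^{−1/2}, where M^{1/2} denotes the unique positive-definite square root of a positive-definite Hermitian matrix M. Then every eigenvalue ℓ of B satisfies 0 ≤ ℓ < 1, and the eigenvalues of F, counted with multiplicity, are exactly the numbers ℓ/(1−ℓ) as ℓ ranges over the eigenvalues of B counted with multiplicity. -/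
open scoped BigOperators Real
open MeasureTheory

noncomputable section

/-! Since `A₁ = R B R` and `A₂ = R (1 - B) R`, the matrix `F` has the characteristic polynomial of
`A₁ A₂⁻¹`, which is similar to `B (1 - B)⁻¹`. The latter is `f(B)` for `f x = x / (1 - x)`, so, `B` being Hermitian, its
characteristic polynomial has the roots `f(ℓ)`. The bounds `0 ≤ ℓ < 1` come from transporting the
positivity of `A₁` and `A₂` to `B` and `1 - B` by congruence with `R⁻¹`. -/

section

open Polynomial

theorem Equiv.Perm.exists_eq_comp_of_map_univ_eq {ι γ : Type*} [Fintype ι] [DecidableEq γ]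
    {f g : ι → γ} (h : Finset.univ.val.map f = Finset.univ.val.map g) :
    ∃ σ : Equiv.Perm ι, ∀ i, f i = g (σ i) := by
  have hcard : ∀ c, Fintype.card {i // f i = c} = Fintype.card {i // g i = c} := fun c => by
    have := congrArg (Multiset.count c) h
    simp only [Multiset.count_map, eq_comm (a := c)] at this
    simpa only [Fintype.card_subtype, Finset.card_def, Finset.filter_val] using this
  exact ⟨Equiv.ofFiberEquiv fun c => Fintype.equivOfCardEq (hcard c),
    fun i => (Equiv.ofFiberEquiv_map _ i).symm⟩

namespace Matrix

variable {n : Type*} [Fintype n] [DecidableEq n]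

theorem charpoly_conj {R : Type*} [CommRing R] {P : Matrix n n R} (hP : IsUnit P)
    (A : Matrix n n R) : (P * A * P⁻¹).charpoly = A.charpoly := by
  rw [charpoly_mul_comm, ← Matrix.mul_assoc, nonsing_inv_mul _ ((isUnit_iff_isUnit_det P).mp hP),
    Matrix.one_mul]

theorem charpoly_inv_mul_mul_inv {R : Type*} [CommRing R] (T A : Matrix n n R) :
    (T⁻¹ * A * T⁻¹).charpoly = (A * (T * T)⁻¹).charpoly := by
  rw [Matrix.mul_assoc, charpoly_mul_comm, Matrix.mul_inv_rev, Matrix.mul_assoc]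

theorem charpoly_congr_mul_inv_congr {R : Type*} [CommRing R] {P : Matrix n n R} (hP : IsUnit P)
    (A B : Matrix n n R) : (P * A * P * (P * B * P)⁻¹).charpoly = (A * B⁻¹).charpoly := by
  rw [← charpoly_conj hP (A * B⁻¹)]
  simp only [Matrix.mul_inv_rev, Matrix.mul_assoc,
    mul_nonsing_inv_cancel_left _ _ ((isUnit_iff_isUnit_det P).mp hP)]

namespace IsHermitian

open scoped ComplexOrder

variable {𝕜 : Type*} [RCLike 𝕜] {A : Matrix n n 𝕜}

theorem eigenvalues_lt_one_of_posDef_one_sub (hA : A.IsHermitian) (h : (1 - A).PosDef) (i : n) :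
    hA.eigenvalues i < 1 := by
  set v := hA.eigenvectorBasis i
  have hnorm : RCLike.re (star (v : n → 𝕜) ⬝ᵥ v) = 1 := by
    rw [dotProduct_comm, ← EuclideanSpace.inner_eq_star_dotProduct, inner_self_eq_norm_sq,
      hA.eigenvectorBasis.orthonormal.1 i, one_pow]
  have hv : (v : n → 𝕜) ≠ 0 := fun h0 => by simp [h0] at hnorm
  have hpos := h.re_dotProduct_pos hv
  rw [sub_mulVec, one_mulVec, dotProduct_sub, map_sub, ← hA.eigenvalues_eq, hnorm] at hpos
  linarith

theorem charpoly_mul_inv_one_sub (hA : A.IsHermitian) (h : ∀ i, hA.eigenvalues i ≠ 1) :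
    (A * (1 - A)⁻¹).charpoly =
      ∏ i, (X - C ((hA.eigenvalues i / (1 - hA.eigenvalues i) : ℝ) : 𝕜)) := by
  have h_spec : ∀ x ∈ spectrum ℝ A, 1 - x ≠ 0 := by
    rw [hA.spectrum_real_eq_range_eigenvalues]
    rintro _ ⟨i, rfl⟩
    exact sub_ne_zero.mpr (h i).symm
  have h_one_sub : cfc (fun x : ℝ => 1 - x) A = 1 - A := by
    rw [cfc_sub (fun _ => 1) (fun x => x), cfc_const_one ℝ A, cfc_id' ℝ A]
  rw [← hA.charpoly_cfc_eq (fun x => x / (1 - x)), cfc_map_div _ _ A h_spec, cfc_id' ℝ A, h_one_sub,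
    nonsing_inv_eq_ringInverse]

theorem exists_perm_eigenvalues_eq_of_charpoly_eq (hA : A.IsHermitian) {d : n → ℝ}
    (h : A.charpoly = ∏ i, (X - C (d i : 𝕜))) :
    ∃ σ : Equiv.Perm n, ∀ i, hA.eigenvalues i = d (σ i) := by
  refine Equiv.Perm.exists_eq_comp_of_map_univ_eq
    (Multiset.map_injective (RCLike.ofReal_injective (K := 𝕜)) ?_)
  rw [Multiset.map_map, Multiset.map_map, ← hA.roots_charpoly_eq_eigenvalues, h,
    Polynomial.roots_prod _ _ (Finset.prod_ne_zero_iff.mpr fun i _ => X_sub_C_ne_zero _)]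
  simp

end IsHermitian
end Matrix

end

open scoped ComplexOrder in
theorem beta_F_eigenvalue_relation_general
    (m : ℕ) (A₁ A₂ R T B F : Matrix (Fin m) (Fin m) ℂ)
    (hA₁ : A₁.PosSemidef) (hA₂ : A₂.PosDef)
    (hR : R.PosDef) (hRsq : R * R = A₁ + A₂)
    (hTsq : T * T = A₂)
    (hB : B = R⁻¹ * A₁ * R⁻¹) (hF : F = T⁻¹ * A₁ * T⁻¹)
    (hBh : B.IsHermitian) (hFh : F.IsHermitian) :
    (∀ i, 0 ≤ hBh.eigenvalues i ∧ hBh.eigenvalues i < 1)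
      ∧ ∃ σ : Equiv.Perm (Fin m), ∀ i,
          hFh.eigenvalues i = hBh.eigenvalues (σ i) / (1 - hBh.eigenvalues (σ i)) := by
  have hR_det : IsUnit R.det := (Matrix.isUnit_iff_isUnit_det R).mp hR.isUnit
  have hA₁_eq : A₁ = R * B * R := by
    simp only [hB, Matrix.mul_assoc, Matrix.nonsing_inv_mul _ hR_det, Matrix.mul_one,
      Matrix.mul_nonsing_inv_cancel_left _ _ hR_det]
  have hA₂_eq : A₂ = R * (1 - B) * R := by
    rw [Matrix.mul_sub, Matrix.sub_mul, Matrix.mul_one, ← hA₁_eq, hRsq, add_sub_cancel_left]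
  have h_one_sub : 1 - B = R⁻¹ * A₂ * R⁻¹ := by
    simp only [hA₂_eq, ← Matrix.mul_assoc, Matrix.nonsing_inv_mul _ hR_det, Matrix.one_mul,
      Matrix.mul_nonsing_inv_cancel_right _ _ hR_det]
  have hB_psd : B.PosSemidef := by
    simpa only [hR.isHermitian.inv.eq, ← hB] using hA₁.conjTranspose_mul_mul_same R⁻¹
  have hB_lt_one : ∀ i, hBh.eigenvalues i < 1 := by
    refine hBh.eigenvalues_lt_one_of_posDef_one_sub ?_
    simpa only [hR.isHermitian.inv.eq, ← h_one_sub] using hA₂.conjTranspose_mul_mul_same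
      (Matrix.mulVec_injective_of_isUnit (Matrix.isUnit_nonsing_inv_iff.mpr hR.isUnit))
  refine ⟨fun i => ⟨hB_psd.eigenvalues_nonneg i, hB_lt_one i⟩,
    hFh.exists_perm_eigenvalues_eq_of_charpoly_eq
      (d := fun i => hBh.eigenvalues i / (1 - hBh.eigenvalues i)) ?_⟩
  rw [hF, Matrix.charpoly_inv_mul_mul_inv, hTsq, hA₁_eq, hA₂_eq,
    Matrix.charpoly_congr_mul_inv_congr hR.isUnit,
    hBh.charpoly_mul_inv_one_sub fun i => (hB_lt_one i).ne]

open scoped ComplexOrder in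
/-- **Relation between the eigenvalues of the Beta and F matrices**: with
`B = (A₁+A₂)^{−1/2} A₁ (A₁+A₂)^{−1/2}` and `F = A₂^{−1/2} A₁ A₂^{−1/2}` (where `R`,
`T` are the unique positive-definite square roots of `A₁+A₂` resp. `A₂`), every
eigenvalue `ℓ` of `B` satisfies `0 ≤ ℓ < 1`, and the eigenvalues of `F`, counted with
multiplicity, are exactly the numbers `ℓ/(1−ℓ)` for `ℓ` eigenvalue of `B`. -/
theorem beta_F_eigenvalue_relation
    (m : ℕ) (A₁ A₂ R T B F : Matrix (Fin m) (Fin m) ℂ)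
    (hA₁ : A₁.PosSemidef) (hA₂ : A₂.PosDef)
    (hR : R.PosDef) (hRsq : R * R = A₁ + A₂)
    (hT : T.PosDef) (hTsq : T * T = A₂)
    (hB : B = R⁻¹ * A₁ * R⁻¹) (hF : F = T⁻¹ * A₁ * T⁻¹)
    (hBh : B.IsHermitian) (hFh : F.IsHermitian) :
    (∀ i, 0 ≤ hBh.eigenvalues i ∧ hBh.eigenvalues i < 1)
      ∧ ∃ σ : Equiv.Perm (Fin m), ∀ i,
          hFh.eigenvalues i = hBh.eigenvalues (σ i) / (1 - hBh.eigenvalues (σ i)) :=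
  beta_F_eigenvalue_relation_general m A₁ A₂ R T B F hA₁ hA₂ hR hRsq hTsq hB hF hBh hFh

end
end
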